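/- arXiv:2507.13473 — 5 statements merged into one kernel-verified Lean document; each statement's English description precedes it below -/
import Mathlib

section
/- Let M be a finite k[X]-module annihilated by a power of X, of length b. Then, in ℤ[T], Σ_{I ⊆ M} T^{ℓ(I) − t(I)} · ∏_{i=0}^{t(I)−1} (T − qⁱ) = T^b, where the sum ranges over all k[X]-submodules I of M. -/
/-!
Evaluate both sides at `T = q ^ n`. Sorting the `q ^ (n b)` tuples in `M ^ n` by the submodule `I`
they generate, it suffices to count the tuples generating `I`. As `X` is nilpotent on `I`, a tuple
generates `I` iff its image spans the `k`-space `I / X I` of dimension `t(I)` (Nakayama), so the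
count is `#(X I) ^ n = q ^ (n (ℓ(I) - t(I)))` times the number `∏_{i < t(I)} (q ^ n - q ^ i)` of
spanning `n`-tuples of `k ^ t(I)`. Two integer polynomials agreeing at infinitely many points are
equal.
-/

open Polynomial

noncomputable section

/-- The invariant `t(M) = dim_k (M / X·M)` of a `k[X]`-module `M`. -/
def tX (k : Type) [Field k] (M : Type) [AddCommGroup M] [Module (Polynomial k) M]
    [Module k M] [IsScalarTower k (Polynomial k) M] : ℕ :=
  Module.finrank k
    (M ⧸ LinearMap.range (LinearMap.lsmul (Polynomial k) M (Polynomial.X : Polynomial k)))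

open Module Submodule

theorem Matrix.span_range_row_eq_top_iff_linearIndependent_col {K m n : Type*} [Field K]
    [Fintype m] [Fintype n] (A : Matrix m n K) :
    span K (Set.range A.row) = ⊤ ↔ LinearIndependent K A.col := by
  rw [linearIndependent_iff_card_eq_finrank_span, Set.finrank, ← Matrix.rank_eq_finrank_span_cols,
    Matrix.rank_eq_finrank_span_row, Submodule.eq_top_iff_finrank_eq,
    Module.finrank_fintype_fun_eq_card, eq_comm]

theorem Module.Basis.span_range_eq_top_iff_linearIndependent_coord {K V ι m : Type*} [Field K]
    [AddCommGroup V] [Module K V] [Fintype ι] [Fintype m] (b : Basis ι K V) (u : m → V) :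
    span K (Set.range u) = ⊤ ↔ LinearIndependent K (fun j i => b.repr (u i) j) := by
  rw [← Submodule.map_eq_top_iff (e := b.equivFun), map_span, ← Set.range_comp]
  exact (Matrix.of fun i j => b.repr (u i) j).span_range_row_eq_top_iff_linearIndependent_col

theorem card_span_range_eq_top {K : Type*} [Field K] [Fintype K] (V : Type*) [AddCommGroup V]
    [Module K V] [Finite V] (n : ℕ) :
    (Nat.card {u : Fin n → V // span K (Set.range u) = ⊤} : ℤ) =
      ∏ i ∈ Finset.range (finrank K V),
        ((Fintype.card K : ℤ) ^ n - (Fintype.card K : ℤ) ^ i) := by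
  set t := finrank K V
  by_cases htn : t ≤ n
  · let b := Module.finBasis K V
    let e : {u : Fin n → V // span K (Set.range u) = ⊤} ≃
        {c : Fin t → Fin n → K // LinearIndependent K c} :=
      ((Equiv.piCongrRight fun _ => b.equivFun.toEquiv).trans (Equiv.piComm _)).subtypeEquiv
        fun u => b.span_range_eq_top_iff_linearIndependent_coord u
    rw [Nat.card_congr e, card_linearIndependent (by simpa using htn), Nat.cast_prod,
      Fin.prod_univ_eq_prod_range (fun i => ((Fintype.card K ^ finrank K (Fin n → K) -
        Fintype.card K ^ i : ℕ) : ℤ))]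
    refine Finset.prod_congr rfl fun i hi => ?_
    rw [finrank_fin_fun, Nat.cast_sub (Nat.pow_le_pow_right Fintype.card_pos
      ((Finset.mem_range.1 hi).le.trans htn))]
    push_cast
    rfl
  · have : IsEmpty {u : Fin n → V // span K (Set.range u) = ⊤} := by
      refine ⟨fun ⟨u, hu⟩ => htn ?_⟩
      have := finrank_range_le_card (R := K) u
      rwa [Set.finrank, hu, finrank_top, Fintype.card_fin] at this
    rw [Nat.card_of_isEmpty, Nat.cast_zero, Finset.prod_eq_zero (Finset.mem_range.2 (not_le.1 htn))
      (sub_self _)]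

theorem Submodule.eq_top_of_sup_range_lsmul_eq_top {A P : Type*} [CommRing A] [AddCommGroup P]
    [Module A P] {r : A} {N : ℕ} (hN : ∀ x : P, r ^ N • x = 0) {S : Submodule A P}
    (h : S ⊔ LinearMap.range (LinearMap.lsmul A P r) = ⊤) : S = ⊤ := by
  have step (x : P) : ∃ y, x - r • y ∈ S := by
    obtain ⟨s, hs, _, ⟨y, rfl⟩, hx⟩ := mem_sup.1 (h ▸ mem_top : x ∈ S ⊔ _)
    exact ⟨y, by simpa [← hx] using hs⟩
  have iterate (j : ℕ) (x : P) : ∃ y, x - r ^ j • y ∈ S := by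
    induction j generalizing x with
    | zero => exact ⟨x, by simp⟩
    | succ j ih =>
      obtain ⟨y, hy⟩ := ih x
      obtain ⟨z, hz⟩ := step y
      refine ⟨z, ?_⟩
      convert S.add_mem hy (S.smul_mem (r ^ j) hz) using 1
      rw [smul_sub, smul_smul, ← pow_succ]
      abel
  refine eq_top_iff'.2 fun x => ?_
  obtain ⟨y, hy⟩ := iterate N x
  simpa [hN] using hy

theorem Submodule.smul_quotient_range_lsmul {A P : Type*} [CommRing A] [AddCommGroup P]
    [Module A P] (r : A) (y : P ⧸ LinearMap.range (LinearMap.lsmul A P r)) : r • y = 0 := by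
  induction y using Quotient.induction_on with
  | _ x => exact (Quotient.mk_eq_zero _).2 ⟨x, rfl⟩

section XTorsion

variable {k P : Type*} [Field k] [AddCommGroup P] [Module k[X] P] [Module k P]
  [IsScalarTower k k[X] P]

local notation "XP" => LinearMap.range (LinearMap.lsmul k[X] P (X : k[X]))

theorem smul_eq_coeff_zero_smul (hX : ∀ y : P, (X : k[X]) • y = 0) (c : k[X]) (y : P) :
    c • y = c.coeff 0 • y := by
  conv_lhs => rw [← X_mul_divX_add c]
  rw [add_smul, mul_smul, hX, zero_add, ← algebraMap_eq, algebraMap_smul]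

theorem restrictScalars_span_eq_of_X_smul_eq_zero (hX : ∀ y : P, (X : k[X]) • y = 0)
    (T : Set P) : (span k[X] T).restrictScalars k = span k T := by
  refine le_antisymm (fun x hx => ?_) (span_le_restrictScalars k k[X] T)
  induction hx using span_induction with
  | mem x hx => exact subset_span hx
  | zero => exact zero_mem _
  | add x y _ _ hx hy => exact add_mem hx hy
  | smul c x _ hx => exact smul_eq_coeff_zero_smul hX c x ▸ smul_mem _ _ hx

theorem span_image_mkQ_eq_top_iff {N : ℕ} (hN : ∀ x : P, (X : k[X]) ^ N • x = 0) (S : Set P) :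
    span k ((XP).mkQ '' S) = ⊤ ↔ span k[X] S = ⊤ := by
  rw [← restrictScalars_span_eq_of_X_smul_eq_zero (smul_quotient_range_lsmul X),
    restrictScalars_eq_top_iff, span_image, map_mkQ_eq_top, sup_comm]
  exact ⟨eq_top_of_sup_range_lsmul_eq_top hN, fun h => by rw [h, top_sup_eq]⟩

end XTorsion

theorem AddMonoidHom.card_pi_preimage {G H ι : Type*} [AddCommGroup G] [AddGroup H] [Finite ι]
    (f : G →+ H) (hf : Function.Surjective f) (S : Set (ι → H)) :
    Nat.card {w : ι → G // f ∘ w ∈ S} = Nat.card f.ker ^ Nat.card ι * Nat.card S := by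
  let σ := Function.surjInv hf
  have hσ : ∀ y, f (σ y) = y := Function.surjInv_eq hf
  have hker : ∀ z : f.ker, f z = 0 := fun z => f.mem_ker.1 z.2
  let e : {w : ι → G // f ∘ w ∈ S} ≃ (ι → f.ker) × S :=
    { toFun w := (fun i => ⟨w.1 i - σ (f (w.1 i)), by simp [hσ]⟩, ⟨f ∘ w.1, w.2⟩)
      invFun p := ⟨fun i => σ (p.2.1 i) + p.1 i, by
        convert p.2.2
        funext i
        simp [hσ, hker]⟩
      left_inv w := by ext; simp
      right_inv p := by ext <;> simp [hσ, hker] }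
  rw [Nat.card_congr e, Nat.card_prod, Nat.card_fun]

theorem Submodule.natCard_eq_pow_finrank_sub_finrank_quotient {k R P : Type*} [Field k]
    [Fintype k] [Ring R] [AddCommGroup P] [Module k P] [Module R P] [SMul k R] [IsScalarTower k R P]
    [Finite P] (N : Submodule R P) :
    Nat.card N = Fintype.card k ^ (finrank k P - finrank k (P ⧸ N)) := by
  have hle : finrank k N ≤ finrank k P := (N.restrictScalars k).finrank_le
  rw [Module.natCard_eq_pow_finrank (K := k), Nat.card_eq_fintype_card, finrank_quotient N]
  congr 1
  omega

theorem Submodule.sum_card_span_range_eq_top {R M ι : Type*} [Ring R] [AddCommGroup M]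
    [Module R M] [Finite M] [Finite ι] [Fintype (Submodule R M)] :
    ∑ I : Submodule R M, Nat.card {w : ι → I // span R (Set.range w) = ⊤} =
      Nat.card M ^ Nat.card ι := by
  rw [← Nat.card_fun,
    ← Nat.card_congr (Equiv.sigmaFiberEquiv fun v : ι → M => span R (Set.range v)), Nat.card_sigma]
  refine Finset.sum_congr rfl fun I _ => Nat.card_congr ?_
  exact
    { toFun w := ⟨fun i => w.1 i, (span_range_subtype_eq_top_iff I fun i => (w.1 i).2).1 w.2⟩
      invFun v := ⟨fun i => ⟨v.1 i, v.2.le (subset_span ⟨i, rfl⟩)⟩,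
        (span_range_subtype_eq_top_iff I _).2 v.2⟩
      left_inv _ := rfl
      right_inv _ := rfl }

section Counting

variable {k P : Type} [Field k] [Fintype k] [AddCommGroup P] [Module k[X] P] [Module k P]
  [IsScalarTower k k[X] P] [Finite P]

local notation "XP" => LinearMap.range (LinearMap.lsmul k[X] P (X : k[X]))

theorem card_span_range_eq_top_of_X_pow_smul_eq_zero {N : ℕ}
    (hN : ∀ x : P, (X : k[X]) ^ N • x = 0) (n : ℕ) :
    (Nat.card {w : Fin n → P // span k[X] (Set.range w) = ⊤} : ℤ) =
      ((Fintype.card k : ℤ) ^ n) ^ (finrank k P - tX k P) *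
        ∏ i ∈ Finset.range (tX k P), ((Fintype.card k : ℤ) ^ n - (Fintype.card k : ℤ) ^ i) := by
  let f := (XP).mkQ.toAddMonoidHom
  have hgen (w : Fin n → P) :
      span k[X] (Set.range w) = ⊤ ↔ f ∘ w ∈ {u | span k (Set.range u) = ⊤} := by
    rw [Set.mem_ofPred_eq, Set.range_comp, ← span_image_mkQ_eq_top_iff hN]
    rfl
  have : Finite (P ⧸ XP) := Finite.of_surjective _ (mkQ_surjective _)
  have hker : Nat.card f.ker = Nat.card XP :=
    Nat.card_congr (Equiv.subtypeEquivRight fun x => by simp [f])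
  rw [Nat.card_congr (Equiv.subtypeEquivRight hgen), f.card_pi_preimage (mkQ_surjective _), hker,
    natCard_eq_pow_finrank_sub_finrank_quotient (k := k), Nat.card_fin, Nat.cast_mul,
    Set.coe_ofPred, card_span_range_eq_top]
  push_cast
  rw [tX]
  ring

end Counting

theorem sum_pow_mul_prod_eq_pow {k M : Type} [Field k] [Fintype k] [AddCommGroup M]
    [Module k[X] M] [Module k M] [IsScalarTower k k[X] M] [Finite M]
    [Fintype (Submodule k[X] M)] {N : ℕ} (hN : ∀ x : M, (X : k[X]) ^ N • x = 0) (n : ℕ) :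
    ∑ I : Submodule k[X] M, ((Fintype.card k : ℤ) ^ n) ^ (finrank k I - tX k I) *
        ∏ i ∈ Finset.range (tX k I), ((Fintype.card k : ℤ) ^ n - (Fintype.card k : ℤ) ^ i) =
      ((Fintype.card k : ℤ) ^ n) ^ finrank k M := by
  rw [Finset.sum_congr rfl fun I _ => (card_span_range_eq_top_of_X_pow_smul_eq_zero
    (fun x : I => Subtype.ext (hN x)) n).symm, ← Nat.cast_sum, sum_card_span_range_eq_top,
    Nat.card_fin, Module.natCard_eq_pow_finrank (K := k), Nat.card_eq_fintype_card]
  push_cast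
  ring

theorem sum_subs_eq_X_pow_general
    (q : ℕ) (k : Type) [Field k] [Fintype k] (hk : Fintype.card k = q)
    (M : Type) [AddCommGroup M] [Module (Polynomial k) M] [Module k M]
    [IsScalarTower k (Polynomial k) M] [Finite M]
    (htor : ∃ N : ℕ, ∀ x : M, (Polynomial.X : Polynomial k) ^ N • x = 0)
    (b : ℕ) (hb : Module.finrank k M = b) :
    ∑ᶠ I : Submodule (Polynomial k) M,
      ((Polynomial.X : Polynomial ℤ) ^ (Module.finrank k ↥I - tX k ↥I) *
        ∏ i ∈ Finset.range (tX k ↥I),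
          (Polynomial.X - Polynomial.C ((q : ℤ) ^ i))) =
      (Polynomial.X : Polynomial ℤ) ^ b := by
  subst hk hb
  obtain ⟨N, hN⟩ := htor
  let := Fintype.ofFinite (Submodule k[X] M)
  rw [finsum_eq_sum_of_fintype]
  have hq : 1 < (Fintype.card k : ℤ) := by exact_mod_cast Fintype.one_lt_card
  refine eq_of_infinite_eval_eq _ _ (Set.infinite_of_injective_forall_mem
    (pow_right_injective₀ (by positivity) hq.ne') fun n => ?_)
  simp only [Set.mem_ofPred_eq, eval_finsetSum, eval_mul, eval_pow, eval_X, eval_prod, eval_sub,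
    eval_C]
  exact sum_pow_mul_prod_eq_pow hN n

theorem sum_subs_eq_X_pow
    (q : ℕ) (hq : Odd q) (k : Type) [Field k] [Fintype k] (hk : Fintype.card k = q)
    (M : Type) [AddCommGroup M] [Module (Polynomial k) M] [Module k M]
    [IsScalarTower k (Polynomial k) M] [Finite M]
    (htor : ∃ N : ℕ, ∀ x : M, (Polynomial.X : Polynomial k) ^ N • x = 0)
    (b : ℕ) (hb : Module.finrank k M = b) :
    ∑ᶠ I : Submodule (Polynomial k) M,
      ((Polynomial.X : Polynomial ℤ) ^ (Module.finrank k ↥I - tX k ↥I) *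
        ∏ i ∈ Finset.range (tX k ↥I),
          (Polynomial.X - Polynomial.C ((q : ℤ) ^ i))) =
      (Polynomial.X : Polynomial ℤ) ^ b :=
  sum_subs_eq_X_pow_general q k hk M htor b hb
end
end

section
/- Let M be a finite k[X]-module annihilated by a power of X, with length ℓ = ℓ(M) and t = t(M), and let a ≥ 0 be an integer. Then the number of surjective k[X]-module homomorphisms k[X]^a → M equals q^{a(ℓ−t)} · ∏_{i=0}^{t−1} (q^a − qⁱ). -/
/-!
Fix an odd prime power `q` and a finite field `k` with `#k = q`; work with `k[X]`-modules.
For a finite `k[X]`-module `M` annihilated by a power of `X`, with length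
`ℓ = ℓ(M) = dim_k M` and `t = t(M) = dim_k (M/X·M)`, and an integer `a ≥ 0`:
the number of surjective `k[X]`-module homomorphisms `k[X]^a → M` equals
`q^{a(ℓ−t)} · ∏_{i=0}^{t−1} (q^a − qⁱ)` (an identity of integers).
-/


open Polynomial

noncomputable section

open Module LinearMap in
/-- Surjective maps from a free module correspond to spanning tuples. -/
def surjEquivSpan (R : Type*) [CommRing R] (M : Type*) [AddCommGroup M] [Module R M] (a : ℕ) :
    {f : (Fin a → R) →ₗ[R] M // Function.Surjective f} ≃
      {v : Fin a → M // Submodule.span R (Set.range v) = ⊤} := by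
  refine Equiv.symm (Equiv.subtypeEquiv (((Pi.basisFun R (Fin a)).constr ℕ).toEquiv) fun v => ?_)
  show _ ↔ Function.Surjective (((Pi.basisFun R (Fin a)).constr ℕ) v)
  rw [← LinearMap.range_eq_top, Basis.constr_range]

open Module LinearMap in
lemma dualMap_bij (K A B : Type*) [Field K] [AddCommGroup A] [Module K A]
    [AddCommGroup B] [Module K B] [FiniteDimensional K A] [FiniteDimensional K B] :
    Function.Bijective (fun f : A →ₗ[K] B => f.dualMap) := by
  constructor
  · intro f g h
    simp only at h
    rw [← Module.dualMap_dualMap_eq_iff (R := K)]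
    rw [h]
  · intro g
    refine ⟨((Module.evalEquiv K B).symm.toLinearMap ∘ₗ g.dualMap) ∘ₗ
      (Module.evalEquiv K A).toLinearMap, ?_⟩
    ext φ x
    simp [LinearMap.dualMap_apply, Module.apply_evalEquiv_symm_apply]

open Module LinearMap in
/-- Injective maps out of a based space correspond to linearly independent tuples. -/
def injEquivLI (K A B : Type*) [Field K] [AddCommGroup A] [Module K A]
    [AddCommGroup B] [Module K B] {n : ℕ} (b : Basis (Fin n) K A) :
    {g : A →ₗ[K] B // Function.Injective g} ≃
      {s : Fin n → B // LinearIndependent K s} := by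
  refine Equiv.subtypeEquiv (b.constr ℕ).toEquiv.symm ?_
  intro g
  show Function.Injective g ↔ LinearIndependent K (((b.constr ℕ).toEquiv.symm) g)
  have : ((b.constr ℕ).toEquiv.symm g) = fun i => g (b i) := rfl
  rw [this]
  constructor
  · intro hg
    exact (b.linearIndependent.map' g (LinearMap.ker_eq_bot.mpr hg))
  · intro h
    rw [← LinearMap.ker_eq_bot]
    rw [Submodule.eq_bot_iff]
    intro x hx
    have hr : Finsupp.linearCombination K (fun i => g (b i)) (b.repr x) = 0 := by
      rw [show (fun i => g (b i)) = ⇑g ∘ ⇑b from rfl, ← Finsupp.apply_linearCombination,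
        b.linearCombination_repr]
      exact hx
    have h2 := linearIndependent_iff_injective_finsuppLinearCombination.mp h
    have := h2 (by rw [hr, map_zero] :
      Finsupp.linearCombination K (fun i => g (b i)) (b.repr x) =
        Finsupp.linearCombination K (fun i => g (b i)) 0)
    rw [← b.linearCombination_repr x, this, map_zero]

open Module LinearMap in
/-- The number of spanning `a`-tuples of a finite vector space. -/
lemma card_span_top (K V : Type*) [Field K] [Fintype K] [AddCommGroup V] [Module K V]
    [Finite V] (a : ℕ) (ht : finrank K V ≤ a) :
    Nat.card {v : Fin a → V // Submodule.span K (Set.range v) = ⊤} =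
      ∏ i ∈ Finset.range (finrank K V), (Fintype.card K ^ a - Fintype.card K ^ i) := by
  have : FiniteDimensional K V := Module.Finite.of_finite
  rw [← Nat.card_congr (surjEquivSpan K V a)]
  have e2 : {f : (Fin a → K) →ₗ[K] V // Function.Surjective f} ≃
      {g : Dual K V →ₗ[K] Dual K (Fin a → K) // Function.Injective g} :=
    Equiv.subtypeEquiv (Equiv.ofBijective _ (dualMap_bij K (Fin a → K) V))
      (fun f => (LinearMap.dualMap_injective_iff).symm)
  rw [Nat.card_congr e2]
  have hd : finrank K (Dual K V) = finrank K V := Subspace.dual_finrank_eq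
  have b : Basis (Fin (finrank K V)) K (Dual K V) := (Module.finBasis K (Dual K V)).reindex
    (finCongr hd)
  rw [Nat.card_congr (injEquivLI K _ _ b)]
  have : Finite (Dual K (Fin a → K)) := Module.finite_of_finite K
  have hfr : finrank K (Dual K (Fin a → K)) = a := by
    rw [Subspace.dual_finrank_eq, Module.finrank_fintype_fun_eq_card, Fintype.card_fin]
  rw [card_linearIndependent (by rw [hfr]; exact ht), hfr]
  rw [Finset.prod_range fun i => Fintype.card K ^ a - Fintype.card K ^ i]

open Module LinearMap in
/-- Counting tuples in `M` whose image under a surjection satisfies a predicate. -/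
lemma card_fiber (K M V : Type*) [Field K] [AddCommGroup M] [Module K M]
    [AddCommGroup V] [Module K V] (π : M →ₗ[K] V) (hπ : Function.Surjective π)
    (a : ℕ) (P : (Fin a → V) → Prop) :
    Nat.card {m : Fin a → M // P (π ∘ m)} =
      Nat.card {v : Fin a → V // P v} * Nat.card (ker π) ^ a := by
  obtain ⟨σ, hσ⟩ := π.exists_rightInverse_of_surjective (LinearMap.range_eq_top.mpr hπ)
  have hσ' : ∀ v, π (σ v) = v := fun v => congrFun (congrArg DFunLike.coe hσ) v
  have e : {m : Fin a → M // P (π ∘ m)} ≃ {v : Fin a → V // P v} × (Fin a → ker π) :=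
    { toFun := fun m => ⟨⟨π ∘ m.1, m.2⟩, fun i => ⟨m.1 i - σ (π (m.1 i)), by
        simp [LinearMap.mem_ker, hσ']⟩⟩
      invFun := fun p => ⟨fun i => σ (p.1.1 i) + (p.2 i).1, by
        have : π ∘ (fun i => σ (p.1.1 i) + (p.2 i).1) = p.1.1 := by
          funext i
          have h0 : π (p.2 i).1 = 0 := (p.2 i).2
          simp [hσ', h0]
        rw [this]; exact p.1.2⟩
      left_inv := fun m => by
        ext i
        simp
      right_inv := fun p => by
        ext i
        · have h0 : π (p.2 i).1 = 0 := (p.2 i).2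
          simp [hσ', h0]
        · have h0 : π (p.2 i).1 = 0 := (p.2 i).2
          simp [hσ', h0] }
  rw [Nat.card_congr e, Nat.card_prod, Nat.card_pi]
  simp [Finset.prod_const]

/-- Nakayama-type lemma for the nilpotent operator `X`. -/
lemma nakayamaX {k : Type} [Field k] {M : Type} [AddCommGroup M] [Module (Polynomial k) M]
    (N : Submodule (Polynomial k) M) {NN : ℕ}
    (htor : ∀ x : M, (X : Polynomial k) ^ NN • x = 0)
    (h : ∀ x : M, ∃ n ∈ N, ∃ y : M, x = n + (X : Polynomial k) • y) : N = ⊤ := by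
  have key : ∀ j : ℕ, ∀ x : M, ∃ n ∈ N, ∃ y : M, x = n + (X : Polynomial k) ^ j • y := by
    intro j
    induction j with
    | zero => intro x; exact ⟨0, N.zero_mem, x, by simp⟩
    | succ j ih =>
      intro x
      obtain ⟨n, hn, y, hy⟩ := ih x
      obtain ⟨n', hn', z, hz⟩ := h y
      refine ⟨n + (X : Polynomial k) ^ j • n', N.add_mem hn (N.smul_mem _ hn'), z, ?_⟩
      rw [hy, hz, smul_add, add_assoc, smul_smul, pow_succ]
  rw [eq_top_iff]
  intro x _
  obtain ⟨n, hn, y, hy⟩ := key NN x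
  rw [hy, htor y, add_zero]; exact hn

section Quot

variable (k : Type) [Field k] (M : Type) [AddCommGroup M] [Module (Polynomial k) M]
    [Module k M] [IsScalarTower k (Polynomial k) M]

abbrev WX : Submodule (Polynomial k) M :=
  LinearMap.range (LinearMap.lsmul (Polynomial k) M (X : Polynomial k))

abbrev VX := M ⧸ WX k M

abbrev piX : M →ₗ[k] VX k M := ((WX k M).mkQ).restrictScalars k

lemma piX_surjective : Function.Surjective (piX k M) := fun w =>
  Quotient.inductionOn' w fun x => ⟨x, rfl⟩

lemma piX_X_smul (x : M) : piX k M ((X : Polynomial k) • x) = 0 := by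
  rw [LinearMap.restrictScalars_apply, Submodule.mkQ_apply, Submodule.Quotient.mk_eq_zero]
  exact ⟨x, rfl⟩

lemma X_smul_VX (w : VX k M) : (X : Polynomial k) • w = 0 := by
  obtain ⟨x, rfl⟩ := piX_surjective k M w
  have : (X : Polynomial k) • (piX k M x) = piX k M ((X : Polynomial k) • x) := rfl
  rw [this, piX_X_smul]

lemma smul_VX (r : Polynomial k) (w : VX k M) : r • w = r.coeff 0 • w := by
  conv_lhs => rw [← X_mul_divX_add r]
  rw [add_smul, mul_comm, mul_smul, X_smul_VX, smul_zero, zero_add]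
  rw [show (C (r.coeff 0) : Polynomial k) • w = algebraMap k (Polynomial k) (r.coeff 0) • w from
    rfl, algebraMap_smul]

lemma span_iffX {NN : ℕ} (htor : ∀ x : M, (X : Polynomial k) ^ NN • x = 0)
    {a : ℕ} (v : Fin a → M) :
    Submodule.span (Polynomial k) (Set.range v) = ⊤ ↔
      Submodule.span k (Set.range (piX k M ∘ v)) = ⊤ := by
  constructor
  · intro hR
    rw [eq_top_iff]
    rintro w -
    obtain ⟨x, rfl⟩ := piX_surjective k M w
    have hx : x ∈ Submodule.span (Polynomial k) (Set.range v) := by rw [hR]; trivial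
    induction hx using Submodule.span_induction with
    | mem y hy =>
      obtain ⟨i, rfl⟩ := hy
      exact Submodule.subset_span ⟨i, rfl⟩
    | zero => rw [map_zero]; exact Submodule.zero_mem _
    | add y z _ _ hy hz => rw [map_add]; exact Submodule.add_mem _ hy hz
    | smul r y _ hy =>
      have h1 : piX k M (r • y) = r • piX k M y := rfl
      rw [h1, smul_VX]
      exact Submodule.smul_mem _ _ hy
  · intro hk
    apply nakayamaX _ htor
    intro x
    have hx : piX k M x ∈ Submodule.span k (Set.range (piX k M ∘ v)) := by rw [hk]; trivial
    rw [Submodule.mem_span_range_iff_exists_fun] at hx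
    obtain ⟨c, hc⟩ := hx
    set n : M := ∑ i, c i • v i with hn
    have hπn : piX k M n = piX k M x := by
      rw [hn, map_sum]
      simpa using hc
    have hmem : n ∈ Submodule.span (Polynomial k) (Set.range v) := by
      refine Submodule.sum_mem _ fun i _ => ?_
      rw [← algebraMap_smul (Polynomial k) (c i) (v i)]
      exact Submodule.smul_mem _ _ (Submodule.subset_span ⟨i, rfl⟩)
    have hker : x - n ∈ WX k M := by
      have : piX k M (x - n) = 0 := by rw [map_sub, hπn, sub_self]
      rw [← Submodule.Quotient.mk_eq_zero (WX k M)]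
      exact this
    obtain ⟨y, hy⟩ := hker
    refine ⟨n, hmem, y, ?_⟩
    have : (X : Polynomial k) • y = x - n := hy
    rw [this]
    abel

end Quot

theorem card_surjections_free_module
    (q : ℕ) (hq : Odd q) (k : Type) [Field k] [Fintype k] (hk : Fintype.card k = q)
    (M : Type) [AddCommGroup M] [Module (Polynomial k) M] [Module k M]
    [IsScalarTower k (Polynomial k) M] [Finite M]
    (htor : ∃ N : ℕ, ∀ x : M, (Polynomial.X : Polynomial k) ^ N • x = 0)
    (a : ℕ) :
    (Nat.card {f : (Fin a → Polynomial k) →ₗ[Polynomial k] M // Function.Surjective f} : ℤ) =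
      (q : ℤ) ^ (a * (Module.finrank k M - tX k M)) *
        ∏ i ∈ Finset.range (tX k M), ((q : ℤ) ^ a - (q : ℤ) ^ i) := by
  obtain ⟨NN, htor⟩ := htor
  have hfd : FiniteDimensional k M := Module.Finite.of_finite
  have hfV : Finite (VX k M) := Quotient.finite _
  have htV : Module.finrank k (VX k M) = tX k M := rfl
  have hq1 : 1 ≤ q := by rw [← hk]; exact Fintype.card_pos
  have e1 : Nat.card {f : (Fin a → Polynomial k) →ₗ[Polynomial k] M // Function.Surjective f}
      = Nat.card {v : Fin a → M // Submodule.span (Polynomial k) (Set.range v) = ⊤} :=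
    Nat.card_congr (surjEquivSpan (Polynomial k) M a)
  have e2 : Nat.card {v : Fin a → M // Submodule.span (Polynomial k) (Set.range v) = ⊤}
      = Nat.card {m : Fin a → M // Submodule.span k (Set.range (piX k M ∘ m)) = ⊤} :=
    Nat.card_congr (Equiv.subtypeEquiv (Equiv.refl _) fun v => span_iffX k M htor v)
  have e3 := card_fiber k M (VX k M) (piX k M) (piX_surjective k M) a
    (fun w => Submodule.span k (Set.range w) = ⊤)
  have hrank : Module.finrank k (VX k M) + Module.finrank k (LinearMap.ker (piX k M))
      = Module.finrank k M := by
    have h := LinearMap.finrank_range_add_finrank_ker (piX k M)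
    rwa [LinearMap.range_eq_top.mpr (piX_surjective k M), finrank_top] at h
  have hker : Nat.card (LinearMap.ker (piX k M))
      = q ^ (Module.finrank k M - tX k M) := by
    letI : Fintype (LinearMap.ker (piX k M)) := Fintype.ofFinite _
    rw [Nat.card_eq_fintype_card, Module.card_eq_pow_finrank (K := k), hk]
    congr 1
    omega
  rw [e1, e2, e3, hker]
  by_cases hta : tX k M ≤ a
  · rw [card_span_top k (VX k M) a (le_of_eq_of_le htV hta), htV, hk]
    push_cast
    rw [Finset.prod_congr rfl (fun i hi => ?_), ← pow_mul, Nat.mul_comm, mul_comm]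
    rw [Nat.cast_sub (Nat.pow_le_pow_right hq1
      (le_trans (Nat.le_of_lt_succ (Nat.lt_succ_of_lt (Finset.mem_range.mp hi))) hta))]
    push_cast
    rfl
  · have hempty : IsEmpty {v : Fin a → VX k M // Submodule.span k (Set.range v) = ⊤} := by
      constructor
      rintro ⟨v, hv⟩
      obtain ⟨f, hf⟩ := (surjEquivSpan k (VX k M) a).symm ⟨v, hv⟩
      have h2 := LinearMap.finrank_range_le f
      rw [LinearMap.range_eq_top.mpr hf, finrank_top, Module.finrank_fintype_fun_eq_card,
        Fintype.card_fin, htV] at h2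
      exact hta h2
    rw [Nat.card_of_isEmpty, Nat.zero_mul]
    rw [Finset.prod_eq_zero (Finset.mem_range.mpr (lt_of_not_ge hta)) (sub_self ((q:ℤ)^a))]
    simp
end
end

section
/- Let m ≥ 1 and let M be a finite k[X]-module annihilated by X^m. Then the number of k[X]-module homomorphisms M → k[X]/(X^m) equals the cardinality of M. -/
open Polynomial

theorem card_hom_quot {R : Type*} [CommRing R] [IsDomain R] {a b : R} (ha : a ≠ 0) (hb : b ≠ 0) :
    Nat.card ((R ⧸ Ideal.span {a}) →ₗ[R] R ⧸ Ideal.span {a * b}) =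
      Nat.card (R ⧸ Ideal.span {a}) := by
  classical
  set I := Ideal.span {a} with hI
  set J := Ideal.span {a * b} with hJ
  have key : ∀ c : R,
      (I : Submodule R R) ≤ LinearMap.ker
        ((J : Submodule R R).mkQ.comp (LinearMap.toSpanSingleton R R (b * c))) := by
    intro c r hr
    rw [hI, Ideal.mem_span_singleton] at hr
    obtain ⟨s, rfl⟩ := hr
    simp only [LinearMap.mem_ker, LinearMap.comp_apply, LinearMap.toSpanSingleton_apply,
      Submodule.mkQ_apply, Submodule.Quotient.mk_eq_zero, smul_eq_mul]
    exact Ideal.mem_span_singleton.mpr ⟨s * c, by ring⟩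
  let g : R →ₗ[R] ((R ⧸ I) →ₗ[R] (R ⧸ J)) :=
    { toFun := fun c => Submodule.liftQ (I : Submodule R R) _ (key c)
      map_add' := by
        intro c d
        refine LinearMap.ext fun x => ?_
        obtain ⟨r, rfl⟩ := Submodule.Quotient.mk_surjective _ x
        simp only [LinearMap.add_apply, Submodule.liftQ_apply, LinearMap.comp_apply,
          Submodule.mkQ_apply, LinearMap.toSpanSingleton_apply]
        rw [← Submodule.Quotient.mk_add]
        congr 1
        simp only [smul_eq_mul]; ring
      map_smul' := by
        intro t c
        refine LinearMap.ext fun x => ?_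
        obtain ⟨r, rfl⟩ := Submodule.Quotient.mk_surjective _ x
        simp only [LinearMap.smul_apply, RingHom.id_apply, Submodule.liftQ_apply,
          LinearMap.comp_apply, Submodule.mkQ_apply, LinearMap.toSpanSingleton_apply]
        rw [← Submodule.Quotient.mk_smul]
        congr 1
        simp only [smul_eq_mul]; ring }
  have hker : (I : Submodule R R) ≤ LinearMap.ker g := by
    intro c hc
    rw [hI, Ideal.mem_span_singleton] at hc
    obtain ⟨s, rfl⟩ := hc
    rw [LinearMap.mem_ker]
    refine LinearMap.ext fun x => ?_
    obtain ⟨r, rfl⟩ := Submodule.Quotient.mk_surjective _ x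
    show Submodule.Quotient.mk (r • (b * (a * s))) = 0
    rw [Submodule.Quotient.mk_eq_zero]
    exact Ideal.mem_span_singleton.mpr ⟨r * s, by simp only [smul_eq_mul]; ring⟩
  let G := Submodule.liftQ (I : Submodule R R) g hker
  have hGapply : ∀ c r : R, G (Submodule.Quotient.mk c) (Submodule.Quotient.mk r)
      = Submodule.Quotient.mk (r * (b * c)) := by
    intro c r; rfl
  have hinj : Function.Injective G := by
    rw [← LinearMap.ker_eq_bot, eq_bot_iff]
    intro x hx
    obtain ⟨c, rfl⟩ := Submodule.Quotient.mk_surjective _ x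
    rw [LinearMap.mem_ker] at hx
    have h1 : (Submodule.Quotient.mk (1 * (b * c)) : R ⧸ J) = 0 := by
      rw [← hGapply, hx]; rfl
    rw [one_mul, Submodule.Quotient.mk_eq_zero, hJ, Ideal.mem_span_singleton] at h1
    obtain ⟨s, hs⟩ := h1
    have : c = a * s := by
      apply mul_left_cancel₀ hb
      rw [hs]; ring
    simp only [Submodule.mem_bot, Submodule.Quotient.mk_eq_zero]
    exact Ideal.mem_span_singleton.mpr ⟨s, this⟩
  have hsurj : Function.Surjective G := by
    intro f
    obtain ⟨d, hd⟩ := Submodule.Quotient.mk_surjective _ (f (Submodule.Quotient.mk 1))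
    have h0 : (Submodule.Quotient.mk (a * d) : R ⧸ J) = 0 := by
      have : a • f (Submodule.Quotient.mk 1) = 0 := by
        rw [← map_smul]
        have : a • (Submodule.Quotient.mk 1 : R ⧸ I) = 0 := by
          rw [← Submodule.Quotient.mk_smul, Submodule.Quotient.mk_eq_zero]
          simpa [hI] using Ideal.mem_span_singleton_self a
        rw [this, map_zero]
      rw [← hd, ← Submodule.Quotient.mk_smul] at this
      simpa [smul_eq_mul] using this
    rw [Submodule.Quotient.mk_eq_zero, hJ, Ideal.mem_span_singleton] at h0
    obtain ⟨s, hs⟩ := h0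
    have hdbs : d = b * s := mul_left_cancel₀ ha (by rw [hs]; ring)
    refine ⟨Submodule.Quotient.mk s, ?_⟩
    refine LinearMap.ext fun x => ?_
    obtain ⟨r, rfl⟩ := Submodule.Quotient.mk_surjective _ x
    rw [hGapply]
    have : (Submodule.Quotient.mk r : R ⧸ I) = r • Submodule.Quotient.mk 1 := by
      rw [← Submodule.Quotient.mk_smul]; simp
    rw [this, map_smul, ← hd, ← Submodule.Quotient.mk_smul]
    simp [hdbs, smul_eq_mul, mul_comm, mul_left_comm]
  exact (Nat.card_congr (Equiv.ofBijective G ⟨hinj, hsurj⟩)).symm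

theorem card_hom_to_cyclic
    (q : ℕ) (hq : Odd q) (k : Type) [Field k] [Fintype k] (hk : Fintype.card k = q)
    (m : ℕ) (hm : 1 ≤ m)
    (M : Type) [AddCommGroup M] [Module (Polynomial k) M] [Finite M]
    (htor : ∀ x : M, (Polynomial.X : Polynomial k) ^ m • x = 0) :
    Nat.card (M →ₗ[Polynomial k]
        (Polynomial k ⧸ Ideal.span {(Polynomial.X : Polynomial k) ^ m})) =
      Nat.card M := by
  classical
  have hXm : (X : Polynomial k) ^ m ≠ 0 := pow_ne_zero _ X_ne_zero
  have htors : Module.IsTorsion (Polynomial k) M := fun x =>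
    ⟨⟨X ^ m, mem_nonZeroDivisors_of_ne_zero hXm⟩, htor x⟩
  obtain ⟨ι, hι, p, hp, e, ⟨l⟩⟩ := Module.equiv_directSum_of_isTorsion htors
  let A : ι → Type := fun i => Polynomial k ⧸ (Polynomial k ∙ p i ^ e i)
  let e2 : M ≃ₗ[Polynomial k] ∀ i, A i :=
    l.trans (DirectSum.linearEquivFunOnFintype (Polynomial k) ι _)
  -- every element of each component is killed by X^m
  have hcomp : ∀ (i : ι) (w : A i), (X : Polynomial k) ^ m • w = 0 := by
    intro i w
    have hz : (X : Polynomial k) ^ m • (Pi.single i w : ∀ j, A j) = 0 := by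
      have := htor (e2.symm (Pi.single i w))
      have h2 := congrArg e2 this
      rw [map_smul, e2.apply_symm_apply, map_zero] at h2
      exact h2
    have := congrFun hz i
    simpa using this
  -- divisibility
  have hdvd : ∀ i : ι, ∃ b : Polynomial k, (X : Polynomial k) ^ m = p i ^ e i * b := by
    intro i
    have := hcomp i (Submodule.Quotient.mk 1)
    rw [← Submodule.Quotient.mk_smul, Submodule.Quotient.mk_eq_zero] at this
    obtain ⟨c, hc⟩ := Submodule.mem_span_singleton.mp this
    have hc' : c * p i ^ e i = X ^ m := by simpa [smul_eq_mul] using hc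
    exact ⟨c, by rw [← hc']; ring⟩
  choose b hb using hdvd
  have hpne : ∀ i, p i ^ e i ≠ 0 := fun i => pow_ne_zero _ (hp i).ne_zero
  have hbne : ∀ i, b i ≠ 0 := by
    intro i h
    apply hXm
    rw [hb i, h, mul_zero]
  set N := Polynomial k ⧸ Ideal.span {(X : Polynomial k) ^ m}
  calc Nat.card (M →ₗ[Polynomial k] N)
      = Nat.card ((∀ i, A i) →ₗ[Polynomial k] N) :=
        Nat.card_congr (e2.arrowCongr (LinearEquiv.refl (Polynomial k) N)).toEquiv
    _ = Nat.card (∀ i, A i →ₗ[Polynomial k] N) :=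
        (Nat.card_congr (LinearMap.lsum (Polynomial k) A (Polynomial k)).toEquiv).symm
    _ = ∏ i, Nat.card (A i →ₗ[Polynomial k] N) := Nat.card_pi
    _ = ∏ i, Nat.card (A i) := by
        refine Finset.prod_congr rfl fun i _ => ?_
        have hspan : (Polynomial k ∙ p i ^ e i) = Ideal.span {p i ^ e i} :=
          (Ideal.submodule_span_eq).symm
        have hspan2 : Ideal.span {(X : Polynomial k) ^ m} = Ideal.span {p i ^ e i * b i} := by
          rw [← hb i]
        show Nat.card ((Polynomial k ⧸ (Polynomial k ∙ p i ^ e i)) →ₗ[Polynomial k] N) =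
          Nat.card (Polynomial k ⧸ (Polynomial k ∙ p i ^ e i))
        rw [hspan]
        show Nat.card ((Polynomial k ⧸ Ideal.span {p i ^ e i}) →ₗ[Polynomial k]
          Polynomial k ⧸ Ideal.span {(X : Polynomial k) ^ m}) = _
        rw [hspan2]
        exact card_hom_quot (hpne i) (hbne i)
    _ = Nat.card (∀ i, A i) := Nat.card_pi.symm
    _ = Nat.card M := (Nat.card_congr e2.toEquiv).symm
end

section
/- Let M be a finite k[X]-module annihilated by a power of X, and let N be any finite k[X]-module. Then the number of k[X]-submodules I ⊆ M with I ≅ N (as k[X]-modules) equals the number of k[X]-submodules I ⊆ M with M/I ≅ N. In particular, for every 0 ≤ a ≤ ℓ(M), the number of submodules of M of length a equals the number of submodules of M of length ℓ(M) − a. -/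
/-!
Fix an odd prime power `q` and a finite field `k` with `#k = q`; work with `k[X]`-modules.
For finite `k[X]`-modules annihilated by a power of `X`, length over `k[X]` coincides with
`dim_k`; write `ℓ(M) := Module.finrank k M`.

Statement: for `M` a finite `k[X]`-module annihilated by a power of `X` and `N` any finite
`k[X]`-module, the number of submodules `I ⊆ M` with `I ≅ N` equals the number of submodules
`I ⊆ M` with `M/I ≅ N`.  In particular, for every `0 ≤ a ≤ ℓ(M)`, the number of submodules of
`M` of length `a` equals the number of submodules of `M` of length `ℓ(M) − a`.
-/

open Polynomial

section DualModule
open Module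
variable {k : Type} [Field k]
variable (k) in
noncomputable def pSmul (V : Type) [AddCommGroup V] [Module k V] [Module (Polynomial k) V]
    [IsScalarTower k (Polynomial k) V] (p : Polynomial k) : V →ₗ[k] V where
  toFun v := p • v
  map_add' := smul_add p
  map_smul' c v := smul_comm p c v

variable (V : Type) [AddCommGroup V] [Module k V] [Module (Polynomial k) V]
  [IsScalarTower k (Polynomial k) V]

noncomputable instance dualSMul : SMul (Polynomial k) (Module.Dual k V) :=
  ⟨fun p f => f ∘ₗ pSmul k V p⟩

@[simp] lemma dual_smul_apply (p : Polynomial k) (f : Module.Dual k V) (v : V) :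
    (p • f) v = f (p • v) := rfl

noncomputable instance dualModule : Module (Polynomial k) (Module.Dual k V) where
  one_smul f := by ext v; simp
  mul_smul p q f := by ext v; simp [mul_smul, mul_comm p q]
  smul_zero p := rfl
  smul_add p f g := rfl
  add_smul p q f := by ext v; simp [add_smul]
  zero_smul f := by ext v; simp

instance dualTower : IsScalarTower k (Polynomial k) (Module.Dual k V) :=
  ⟨fun c p f => by ext v; simp [smul_assoc]⟩

variable {V} {W : Type} [AddCommGroup W] [Module k W] [Module (Polynomial k) W]
  [IsScalarTower k (Polynomial k) W]

/-- Dual of an `R`-linear equivalence. -/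
noncomputable def dualCongr (e : V ≃ₗ[Polynomial k] W) :
    Module.Dual k W ≃ₗ[Polynomial k] Module.Dual k V where
  toFun f := f ∘ₗ (e.restrictScalars k : V →ₗ[k] W)
  invFun f := f ∘ₗ ((e.symm.restrictScalars k : W →ₗ[k] V))
  map_add' f g := rfl
  map_smul' p f := by ext v; simp
  left_inv f := by ext w; simp
  right_inv f := by ext v; simp

variable {ι : Type} [Fintype ι] [DecidableEq ι] (Q : ι → Type) [∀ i, AddCommGroup (Q i)]
  [∀ i, Module k (Q i)] [∀ i, Module (Polynomial k) (Q i)]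
  [∀ i, IsScalarTower k (Polynomial k) (Q i)]

/-- Dual of a finite product. -/
noncomputable def dualPi :
    Module.Dual k (∀ i, Q i) ≃ₗ[Polynomial k] ∀ i, Module.Dual k (Q i) := by
  refine LinearEquiv.ofBijective
    { toFun := fun f i => f ∘ₗ LinearMap.single k Q i
      map_add' := fun f g => rfl
      map_smul' := fun p f => by
        funext i; ext x
        simp only [LinearMap.coe_comp, Function.comp_apply, LinearMap.single_apply,
          dual_smul_apply, Pi.smul_apply, RingHom.id_apply]
        congr 1
        funext j
        by_cases h : j = i
        · subst h; simp
        · simp [Pi.single_eq_of_ne h] } ?_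
  have : (fun (f : Module.Dual k (∀ i, Q i)) i => f ∘ₗ LinearMap.single k Q i)
      = ⇑(LinearMap.lsum k Q k).symm := by
    funext f
    apply (LinearMap.lsum k Q k).injective
    simp only [LinearEquiv.apply_symm_apply]
    ext v x
    simp only [LinearMap.lsum_apply, LinearMap.coe_sum, LinearMap.coe_comp,
      Function.comp_apply, LinearMap.coe_single, LinearMap.proj_apply, Finset.sum_apply,
      LinearMap.coe_proj]
    rw [Finset.sum_eq_single v]
    · simp
    · intro b _ hb
      have : Function.eval b (Pi.single v x) = 0 := Pi.single_eq_of_ne hb x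
      rw [this, Pi.single_zero]; simp
    · intro h; exact absurd (Finset.mem_univ v) h
  exact this ▸ (LinearMap.lsum k Q k).symm.bijective

/-- Annihilator of a `k[X]`-submodule inside the `k`-dual, as a `k[X]`-submodule. -/
noncomputable def dualAnn (I : Submodule (Polynomial k) V) : Submodule (Polynomial k) (Module.Dual k V) where
  carrier := {f | ∀ x ∈ I, f x = 0}
  add_mem' hf hg := fun x hx => by
    simp [LinearMap.add_apply, hf x hx, hg x hx]
  zero_mem' := fun x _ => rfl
  smul_mem' p f hf := fun x hx => hf _ (I.smul_mem p hx)

lemma mem_dualAnn {I : Submodule (Polynomial k) V} {f : Module.Dual k V} :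
    f ∈ dualAnn I ↔ ∀ x ∈ I, f x = 0 := Iff.rfl

lemma dualAnn_restrictScalars (I : Submodule (Polynomial k) V) :
    (dualAnn I).restrictScalars k = (I.restrictScalars k).dualAnnihilator := by
  ext f
  simp [Submodule.mem_dualAnnihilator, mem_dualAnn]

/-- Restriction map to a submodule, `k[X]`-linearly. -/
noncomputable def dualRes (I : Submodule (Polynomial k) V) :
    Module.Dual k V →ₗ[Polynomial k] Module.Dual k ↥I where
  toFun f := f ∘ₗ ((I.subtype).restrictScalars k)
  map_add' f g := rfl
  map_smul' p f := by ext x; simp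

lemma dualRes_surjective (I : Submodule (Polynomial k) V) :
    Function.Surjective (dualRes (V := V) I) := by
  intro g
  obtain ⟨G, hG⟩ := LinearMap.exists_extend
    (p := I.restrictScalars k) (V' := k)
    (g ∘ₗ ((Submodule.restrictScalarsEquiv k (Polynomial k) V I).restrictScalars k).toLinearMap)
  refine ⟨G, ?_⟩
  ext x
  have := LinearMap.congr_fun hG x
  exact this

lemma ker_dualRes (I : Submodule (Polynomial k) V) :
    LinearMap.ker (dualRes (V := V) I) = dualAnn I := by
  ext f
  constructor
  · intro hf x hx
    have := LinearMap.congr_fun hf ⟨x, hx⟩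
    simpa [dualRes] using this
  · intro hf
    ext x
    exact hf x.1 x.2

/-- First isomorphism: `Dual V ⧸ dualAnn I ≃ Dual I`. -/
noncomputable def dualQuotAnnEquiv (I : Submodule (Polynomial k) V) :
    (Module.Dual k V ⧸ dualAnn I) ≃ₗ[Polynomial k] Module.Dual k ↥I :=
  (Submodule.quotEquivOfEq _ _ (ker_dualRes I).symm).trans
    ((dualRes I).quotKerEquivOfSurjective (dualRes_surjective I))

/-- Linear equivalence between subsingleton modules. -/
noncomputable def subsingletonLEquiv (R A B : Type) [CommRing R] [AddCommGroup A]
    [AddCommGroup B] [Module R A] [Module R B] [Subsingleton A] [Subsingleton B] :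
    A ≃ₗ[R] B :=
  LinearEquiv.ofBijective (0 : A →ₗ[R] B)
    ⟨fun a b _ => Subsingleton.elim a b, fun b => ⟨0, Subsingleton.elim _ _⟩⟩

set_option maxHeartbeats 1000000 in
lemma cyclic_selfDual_succ (d : ℕ) :
    Nonempty ((Polynomial k ⧸ (Polynomial k ∙ ((X : Polynomial k) ^ (d+1))))
      ≃ₗ[Polynomial k]
      Module.Dual k (Polynomial k ⧸ (Polynomial k ∙ ((X : Polynomial k) ^ (d+1))))) := by
  set g : Polynomial k := X ^ (d + 1) with hg
  set S : Submodule (Polynomial k) (Polynomial k) := Polynomial k ∙ g with hS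
  have hgdvd : ∀ x ∈ S, g ∣ x := by
    intro x hx
    obtain ⟨c, hc⟩ := Submodule.mem_span_singleton.mp hx
    exact ⟨c, by rw [← hc, smul_eq_mul, mul_comm]⟩
  have hF : S.restrictScalars k ≤ LinearMap.ker (lcoeff k d) := by
    intro x hx
    have : (X : Polynomial k) ^ (d+1) ∣ x := hgdvd x hx
    simpa using (X_pow_dvd_iff.mp this d (by omega))
  set f0 : (Polynomial k ⧸ S) →ₗ[k] k :=
    (Submodule.liftQ (S.restrictScalars k) (lcoeff k d) hF) ∘ₗ
      (Submodule.Quotient.restrictScalarsEquiv k S).symm.toLinearMap with hf0def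
  have hsymm : ∀ h : Polynomial k,
      (Submodule.Quotient.restrictScalarsEquiv k S).symm (Submodule.Quotient.mk h)
        = Submodule.Quotient.mk h := by
    intro h
    apply (Submodule.Quotient.restrictScalarsEquiv k S).injective
    rw [LinearEquiv.apply_symm_apply, Submodule.Quotient.restrictScalarsEquiv_mk]
  have hf0 : ∀ h : Polynomial k, f0 (Submodule.Quotient.mk h) = coeff h d := by
    intro h
    rw [hf0def, LinearMap.comp_apply, LinearEquiv.coe_toLinearMap, hsymm,
      Submodule.liftQ_apply]
    rfl
  have hsm : ∀ (q h : Polynomial k),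
      (q • f0) (Submodule.Quotient.mk h) = coeff (q * h) d := by
    intro q h
    rw [dual_smul_apply, ← smul_eq_mul, ← Submodule.Quotient.mk_smul, hf0]
  set Φ : Polynomial k →ₗ[Polynomial k]
      Module.Dual k (Polynomial k ⧸ S) :=
    LinearMap.toSpanSingleton (Polynomial k) _ f0 with hΦ
  have hker : LinearMap.ker Φ = S := by
    ext q
    simp only [LinearMap.mem_ker, hΦ, LinearMap.toSpanSingleton_apply]
    constructor
    · intro hq
      have hdvd : (X : Polynomial k) ^ (d+1) ∣ q := by
        rw [X_pow_dvd_iff]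
        intro j hj
        have hj' : j ≤ d := by omega
        have h1 := DFunLike.congr_fun hq
          (Submodule.Quotient.mk ((X : Polynomial k) ^ (d - j)))
        rw [hsm] at h1
        have h2 : coeff (q * (X : Polynomial k) ^ (d - j)) d = coeff q j := by
          rw [coeff_mul_X_pow']
          have hdj : d - (d - j) = j := by omega
          simp [Nat.sub_le, hdj]
        rw [h2] at h1
        simpa using h1
      obtain ⟨c, hc⟩ := hdvd
      exact Submodule.mem_span_singleton.mpr ⟨c, by rw [smul_eq_mul, mul_comm, ← hc]⟩
    · intro hq
      apply LinearMap.ext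
      intro y
      obtain ⟨h, rfl⟩ := Submodule.Quotient.mk_surjective S y
      rw [hsm]
      have : (X : Polynomial k) ^ (d+1) ∣ q * h := Dvd.dvd.mul_right (hgdvd q hq) h
      simpa using (X_pow_dvd_iff.mp this d (by omega))
  set Φ' : (Polynomial k ⧸ S) →ₗ[Polynomial k]
      Module.Dual k (Polynomial k ⧸ S) :=
    Submodule.liftQ S Φ (le_of_eq hker.symm) with hΦ'
  have hinj : Function.Injective Φ' := by
    rw [← LinearMap.ker_eq_bot, hΦ', Submodule.ker_liftQ_eq_bot]
    exact le_of_eq hker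
  haveI : FiniteDimensional k (Polynomial.degreeLT k (d+1)) :=
    LinearEquiv.finiteDimensional (Polynomial.degreeLTEquiv k (d+1)).symm
  have hφsurj : Function.Surjective
      (((S.mkQ).restrictScalars k) ∘ₗ (Polynomial.degreeLT k (d+1)).subtype) := by
    intro y
    obtain ⟨h, rfl⟩ := Submodule.Quotient.mk_surjective S y
    refine ⟨⟨h %ₘ g, ?_⟩, ?_⟩
    · rw [Polynomial.mem_degreeLT]
      calc (h %ₘ g).degree < g.degree := degree_modByMonic_lt h (monic_X_pow _)
      _ ≤ ((d+1 : ℕ) : WithBot ℕ) := by rw [hg, degree_X_pow]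
    · simp only [LinearMap.comp_apply, Submodule.subtype_apply,
        LinearMap.coe_restrictScalars, Submodule.mkQ_apply]
      rw [Submodule.Quotient.eq]
      refine Submodule.mem_span_singleton.mpr ⟨-(h /ₘ g), ?_⟩
      have hmd := modByMonic_add_div h ((X : Polynomial k) ^ (d+1))
      rw [← hg] at hmd
      rw [smul_eq_mul]
      linear_combination -hmd
  haveI : FiniteDimensional k (Polynomial k ⧸ S) :=
    Module.Finite.of_surjective _ hφsurj
  have hrank : finrank k (Polynomial k ⧸ S)
      = finrank k (Module.Dual k (Polynomial k ⧸ S)) :=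
    (Subspace.dual_finrank_eq).symm
  have hsurj : Function.Surjective Φ' := by
    have h1 : Function.Injective (LinearMap.restrictScalars k Φ') := hinj
    exact (LinearMap.injective_iff_surjective_of_finrank_eq_finrank hrank).mp h1
  exact ⟨LinearEquiv.ofBijective Φ' ⟨hinj, hsurj⟩⟩

set_option maxHeartbeats 1000000 in
lemma cyclic_selfDual (e : ℕ) :
    Nonempty ((Polynomial k ⧸ (Polynomial k ∙ ((X : Polynomial k) ^ e)))
      ≃ₗ[Polynomial k]
      Module.Dual k (Polynomial k ⧸ (Polynomial k ∙ ((X : Polynomial k) ^ e)))) := by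
  rcases e with _ | d
  · have hS : (Polynomial k ∙ ((X : Polynomial k) ^ 0)) = ⊤ := by
      rw [pow_zero]
      exact Ideal.span_singleton_one
    haveI h1 : Subsingleton (Polynomial k ⧸ (Polynomial k ∙ ((X : Polynomial k) ^ 0))) :=
      Submodule.Quotient.subsingleton_iff.mpr hS
    haveI : Subsingleton (Module.Dual k
        (Polynomial k ⧸ (Polynomial k ∙ ((X : Polynomial k) ^ 0)))) :=
      inferInstance
    exact ⟨subsingletonLEquiv _ _ _⟩
  · exact cyclic_selfDual_succ d

set_option maxHeartbeats 1000000 in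
lemma selfDual (V : Type) [AddCommGroup V] [Module k V] [Module (Polynomial k) V]
    [IsScalarTower k (Polynomial k) V] [Finite V]
    (htor : ∃ n : ℕ, ∀ v : V, (X : Polynomial k) ^ n • v = 0) :
    Nonempty (V ≃ₗ[Polynomial k] Module.Dual k V) := by
  classical
  obtain ⟨n, hn⟩ := htor
  haveI : Module.Finite (Polynomial k) V := Module.Finite.of_finite
  have htors : Module.IsTorsion (Polynomial k) V := fun v =>
    ⟨⟨X ^ n, mem_nonZeroDivisors_of_ne_zero (pow_ne_zero _ X_ne_zero)⟩, hn v⟩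
  obtain ⟨ι, hι, p, hp, e, ⟨eqv⟩⟩ :=
    Module.equiv_directSum_of_isTorsion (R := Polynomial k) (M := V) htors
  haveI := hι
  have hspan : ∀ i, (Polynomial k ∙ (p i ^ e i))
      = (Polynomial k ∙ ((X : Polynomial k) ^ (e i))) := by
    intro i
    by_cases he : e i = 0
    · rw [he, pow_zero, pow_zero]
    · -- the summand is killed by X^n
      set z : Polynomial k ⧸ (Polynomial k ∙ (p i ^ e i)) := Submodule.Quotient.mk 1 with hz
      set y := DirectSum.lof (Polynomial k) ι
        (fun j => Polynomial k ⧸ (Polynomial k ∙ (p j ^ e j))) i z with hy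
      have h0 : (X : Polynomial k) ^ n • y = 0 := by
        have h1 : (X : Polynomial k) ^ n • y = eqv ((X : Polynomial k) ^ n • eqv.symm y) := by
          rw [map_smul, eqv.apply_symm_apply]
        rw [h1, hn, map_zero]
      have h2 : (X : Polynomial k) ^ n • z = 0 := by
        have h3 : (X : Polynomial k) ^ n • z
            = DirectSum.component (Polynomial k) ι _ i ((X : Polynomial k) ^ n • y) := by
          rw [map_smul, hy, DirectSum.component.lof_self]
        rw [h3, h0, map_zero]
      have h4 : ((X : Polynomial k) ^ n : Polynomial k) ∈ (Polynomial k ∙ (p i ^ e i)) := by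
        rw [← Submodule.Quotient.mk_eq_zero]
        have : (Submodule.Quotient.mk ((X : Polynomial k) ^ n)
            : Polynomial k ⧸ (Polynomial k ∙ (p i ^ e i)))
            = (X : Polynomial k) ^ n • z := by
          rw [hz, ← Submodule.Quotient.mk_smul, smul_eq_mul, mul_one]
        rw [this, h2]
      obtain ⟨c, hc⟩ := Submodule.mem_span_singleton.mp h4
      have hdvd : p i ^ e i ∣ (X : Polynomial k) ^ n :=
        ⟨c, by rw [← hc, smul_eq_mul, mul_comm]⟩
      have hprime : Prime (p i) := (hp i).prime
      have hpX : p i ∣ (X : Polynomial k) :=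
        hprime.dvd_of_dvd_pow (dvd_trans (dvd_pow_self (p i) he) hdvd)
      have hassoc : Associated (p i) (X : Polynomial k) :=
        (hp i).associated_of_dvd irreducible_X hpX
      exact Ideal.span_singleton_eq_span_singleton.mpr (hassoc.pow_pow)
  set Q : ι → Type := fun i => Polynomial k ⧸ (Polynomial k ∙ ((X : Polynomial k) ^ (e i)))
    with hQ
  have E : V ≃ₗ[Polynomial k] ∀ i, Q i :=
    eqv.trans ((DirectSum.linearEquivFunOnFintype (Polynomial k) ι _).trans
      (LinearEquiv.piCongrRight (fun i => Submodule.quotEquivOfEq _ _ (hspan i))))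
  have dQ : ∀ i, Q i ≃ₗ[Polynomial k] Module.Dual k (Q i) := fun i =>
    (cyclic_selfDual (e i)).some
  exact ⟨E.trans ((LinearEquiv.piCongrRight dQ).trans
    ((dualPi Q).symm.trans (dualCongr E)))⟩
end DualModule

set_option maxHeartbeats 2000000

theorem card_submodules_iso_eq_card_quotients_iso
    (q : ℕ) (hq : Odd q) (k : Type) [Field k] [Fintype k] (hk : Fintype.card k = q)
    (M : Type) [AddCommGroup M] [Module (Polynomial k) M] [Module k M]
    [IsScalarTower k (Polynomial k) M] [Finite M]
    (htor : ∃ NN : ℕ, ∀ x : M, (Polynomial.X : Polynomial k) ^ NN • x = 0)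
    (N : Type) [AddCommGroup N] [Module (Polynomial k) N] [Finite N] :
    (Nat.card {I : Submodule (Polynomial k) M // Nonempty (↥I ≃ₗ[Polynomial k] N)} =
        Nat.card {I : Submodule (Polynomial k) M // Nonempty ((M ⧸ I) ≃ₗ[Polynomial k] N)}) ∧
      ∀ a ≤ Module.finrank k M,
        Nat.card {I : Submodule (Polynomial k) M // Module.finrank k ↥I = a} =
          Nat.card {I : Submodule (Polynomial k) M //
            Module.finrank k ↥I = Module.finrank k M - a} := by
  classical
  obtain ⟨NN, hNN⟩ := htor
  haveI : Finite (Submodule (Polynomial k) M) :=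
    Finite.of_injective (fun P => (P : Set M)) SetLike.coe_injective
  haveI : Module.Finite k M := Module.Finite.of_finite
  obtain ⟨ε⟩ := selfDual M ⟨NN, hNN⟩
  set Ψ : Submodule (Polynomial k) M → Submodule (Polynomial k) M :=
    fun I => (dualAnn I).comap ε.toLinearMap with hΨ
  have hmap : ∀ I : Submodule (Polynomial k) M,
      (Ψ I).map (ε.toLinearMap) = dualAnn I := fun I =>
    Submodule.map_comap_eq_of_surjective ε.surjective _
  have hinj : Function.Injective Ψ := by
    intro I J h
    have h2 : dualAnn I = dualAnn J := by
      rw [← hmap I, ← hmap J, h]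
    have h3 : (I.restrictScalars k).dualAnnihilator = (J.restrictScalars k).dualAnnihilator := by
      rw [← dualAnn_restrictScalars, ← dualAnn_restrictScalars, h2]
    have h4 : I.restrictScalars k = J.restrictScalars k :=
      Subspace.dualAnnihilator_inj.mp h3
    exact Submodule.restrictScalars_injective k _ _ h4
  have hbij : Function.Bijective Ψ := Finite.injective_iff_bijective.mp hinj
  -- the key equivalence `M ⧸ Ψ I ≃ I`
  have eB : ∀ I : Submodule (Polynomial k) M,
      (M ⧸ Ψ I) ≃ₗ[Polynomial k] ↥I := by
    intro I
    have dI : Nonempty (↥I ≃ₗ[Polynomial k] Module.Dual k ↥I) := by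
      refine selfDual ↥I ⟨NN, fun x => ?_⟩
      apply Subtype.ext
      rw [Submodule.coe_smul]
      simpa using hNN x.1
    exact ((Submodule.Quotient.equiv (Ψ I) (dualAnn I) ε (hmap I)).trans
      (dualQuotAnnEquiv I)).trans dI.some.symm
  -- rank bookkeeping
  have quotAdd : ∀ P : Submodule (Polynomial k) M,
      Module.finrank k (M ⧸ P) + Module.finrank k ↥P = Module.finrank k M := by
    intro P
    have e1 : (M ⧸ P.restrictScalars k) ≃ₗ[k] M ⧸ P :=
      Submodule.Quotient.restrictScalarsEquiv k P
    have e2 : ↥(P.restrictScalars k) ≃ₗ[k] ↥P :=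
      (Submodule.restrictScalarsEquiv k (Polynomial k) M P).restrictScalars k
    rw [← e1.finrank_eq, ← e2.finrank_eq]
    exact Submodule.finrank_quotient_add_finrank _
  have hrank : ∀ I : Submodule (Polynomial k) M,
      Module.finrank k ↥(Ψ I) = Module.finrank k M - Module.finrank k ↥I := by
    intro I
    have h1 := quotAdd (Ψ I)
    have h2 : Module.finrank k (M ⧸ Ψ I) = Module.finrank k ↥I :=
      ((eB I).restrictScalars k).finrank_eq
    omega
  have hle : ∀ I : Submodule (Polynomial k) M,
      Module.finrank k ↥I ≤ Module.finrank k M := by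
    intro I
    have := quotAdd I
    omega
  constructor
  · refine Nat.card_congr (Equiv.subtypeEquiv (Equiv.ofBijective Ψ hbij) fun I => ?_)
    constructor
    · rintro ⟨f⟩
      exact ⟨(eB I).trans f⟩
    · rintro ⟨f⟩
      exact ⟨(eB I).symm.trans f⟩
  · intro a ha
    refine Nat.card_congr (Equiv.subtypeEquiv (Equiv.ofBijective Ψ hbij) fun I => ?_)
    have h2 : Module.finrank k ↥((Equiv.ofBijective Ψ hbij) I)
        = Module.finrank k M - Module.finrank k ↥I := hrank I
    rw [h2]
    have := hle I
    omega
end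

section
/- Let m ≥ 1 and e ≥ 1 be integers, set d = m·e, and let a, b ≥ 0 be integers with a + b = d. Let y : {1,…,d} → ℤ/mℤ be a function each of whose fibers has exactly e elements. Suppose there exists a permutation μ of {1,…,d} with μ({1,…,a}) = {1,…,a} and such that y(μ(i)) = y(i) + 1 for all i ∈ {1,…,d}. Then m divides a, and for every c ∈ ℤ/mℤ the number of i ∈ {1,…,a} with y(i) = c equals a/m. -/
/-!
The number of `i < a` with `y i = c` does not change when `c` is replaced by `c + 1`: the
permutation `μ` preserves `{i | i < a}` and raises `y` by one, so it maps the first set of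
indices bijectively onto the second. A function on `ℤ/mℤ` that is invariant under `c ↦ c + 1`
is constant, and its `m` values add up to `a`, so each of them is `a / m`.
-/

open Finset

theorem Equiv.Perm.apply_mem_iff_of_image_eq {α : Type*} {σ : Equiv.Perm α} {s : Set α}
    (h : σ '' s = s) (x : α) : σ x ∈ s ↔ x ∈ s := by
  conv_lhs => rw [← h]
  exact σ.injective.mem_set_image

theorem Finset.card_filter_and_add_eq_of_perm {α G : Type*} [Fintype α] [AddGroup G]
    [DecidableEq G] {p : α → Prop} [DecidablePred p] (σ : Equiv.Perm α)
    (hp : ∀ x, p (σ x) ↔ p x) {f : α → G} {g : G} (hf : ∀ x, f (σ x) = f x + g) (c : G) :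
    #{x | p x ∧ f x = c + g} = #{x | p x ∧ f x = c} := by
  refine card_nbij' σ.symm σ (fun x hx => ?_) (fun x hx => ?_) (fun x _ => by simp)
    (fun x _ => by simp)
  · have hσ := hf (σ.symm x)
    simp only [coe_filter, mem_univ, true_and, Set.mem_ofPred_eq, Equiv.apply_symm_apply]
      at hx hσ ⊢
    exact ⟨(hp _).1 (by simpa using hx.1), add_right_cancel (hσ ▸ hx.2)⟩
  · simp only [coe_filter, mem_univ, true_and, Set.mem_ofPred_eq] at hx ⊢
    exact ⟨(hp x).2 hx.1, by rw [hf, hx.2]⟩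

theorem ZMod.apply_eq_apply_zero_of_forall_add_one {m : ℕ} {β : Type*} {F : ZMod m → β}
    (h : ∀ c, F (c + 1) = F c) (c : ZMod m) : F c = F 0 := by
  obtain ⟨k, rfl⟩ := ZMod.intCast_surjective c
  induction k using Int.induction_on with
  | zero => simp
  | succ k ih => rw [Int.cast_add, Int.cast_one, h, ih]
  | pred k ih => rw [← ih, ← h, Int.cast_sub, Int.cast_one, sub_add_cancel]

theorem Finset.sum_card_filter_and_eq {α β : Type*} [Fintype α] [Fintype β] [DecidableEq β]
    (p : α → Prop) [DecidablePred p] (f : α → β) :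
    ∑ c, #{x | p x ∧ f x = c} = #{x | p x} := by
  rw [card_eq_sum_card_fiberwise (f := f) (t := univ) fun x _ => mem_coe.2 (mem_univ (f x))]
  simp only [filter_filter]

theorem fiber_count_of_frobenius_stable_general
    (m : ℕ) (hm : 1 ≤ m) (d : ℕ)
    (a b : ℕ) (hab : a + b = d)
    (y : Fin d → ZMod m)
    (μ : Equiv.Perm (Fin d))
    (hμa : (fun i => μ i) '' {i : Fin d | (i : ℕ) < a} = {i : Fin d | (i : ℕ) < a})
    (hμy : ∀ i, y (μ i) = y i + 1) :
    m ∣ a ∧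
      ∀ c : ZMod m,
        (Finset.filter (fun i => i.val < a ∧ y i = c) Finset.univ).card = a / m := by
  have : NeZero m := ⟨by omega⟩
  set F : ZMod m → ℕ := fun c => #{i : Fin d | i.val < a ∧ y i = c}
  have hconst : ∀ c, F c = F 0 := ZMod.apply_eq_apply_zero_of_forall_add_one
    (card_filter_and_add_eq_of_perm μ (μ.apply_mem_iff_of_image_eq hμa) hμy)
  have hsum : m * F 0 = a := calc
    m * F 0 = ∑ c, F c := by simp [hconst, ZMod.card]
    _ = #{i : Fin d | i.val < a} := sum_card_filter_and_eq _ y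
    _ = a := by rw [Fin.card_filter_val_lt]; omega
  refine ⟨⟨F 0, hsum.symm⟩, fun c => ?_⟩
  change F c = a / m
  rw [hconst, ← hsum, Nat.mul_div_cancel_left _ (by omega)]

/-- combinatorial lemma on Frobenius-stable orbits. -/
theorem fiber_count_of_frobenius_stable
    (m e : ℕ) (hm : 1 ≤ m) (he : 1 ≤ e) (d : ℕ) (hd : d = m * e)
    (a b : ℕ) (hab : a + b = d)
    (y : Fin d → ZMod m)
    (hfib : ∀ c : ZMod m, (Finset.filter (fun i => y i = c) Finset.univ).card = e)
    (μ : Equiv.Perm (Fin d))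
    (hμa : (fun i => μ i) '' {i : Fin d | (i : ℕ) < a} = {i : Fin d | (i : ℕ) < a})
    (hμy : ∀ i, y (μ i) = y i + 1) :
    m ∣ a ∧
      ∀ c : ZMod m,
        (Finset.filter (fun i => i.val < a ∧ y i = c) Finset.univ).card = a / m :=
  fiber_count_of_frobenius_stable_general m hm d a b hab y μ hμa hμy
end
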